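/- Let ψ₁(y) = det_{1≤i,j≤N}[ C(y_i − j + n − 1, y_i − j) ] for integers n ≥ N ≥ 1 and 1 ≤ y₁ < … < y_N. Then ψ₁(y) = ∏_{1≤i<j≤N}(y_j − y_i) · ∏_{i=1}^{N} (y_i − N + n − 1)! / ((y_i − 1)!·(i − N + n − 1)!). -/

import Mathlib

/-- Binomial coefficient `C(a, k)` for integer arguments, with the convention
that it vanishes when `k < 0` or `k > a`. -/
def zchoose (a k : ℤ) : ℕ :=
  if 0 ≤ k ∧ k ≤ a then a.toNat.choose k.toNat else 0

/-!
For `x ≥ 1` the entry `C(x - j + n - 1, x - j)` equals the rising factorial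
`(x - j + 1)^{(n-1)} / (n-1)!` (for `x < j` it vanishes on both sides, since `n ≥ N` puts
a zero among the factors). That rising factorial is `x^{(n-N)}`, a factor depending only on the
row, times a polynomial `G_j(x)` (`columnPoly`) of degree `N - 1`. Hence the matrix is a
row-scaled product of the Vandermonde matrix of `y` with the coefficient matrix of the `G_j`.
The determinant of that coefficient matrix is read off at `y = (1, …, N)`, where the original
matrix is unitriangular.
-/

open Finset Matrix Polynomial
open scoped Nat

theorem Finset.prod_filter_fst_lt_snd {ι M : Type*} [LinearOrder ι] [Fintype ι]
    [LocallyFiniteOrderTop ι] [CommMonoid M] (f : ι → ι → M) :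
    ∏ p ∈ univ.filter (fun p : ι × ι => p.1 < p.2), f p.1 p.2 = ∏ i, ∏ j ∈ Ioi i, f i j := by
  rw [prod_filter, Fintype.prod_prod_type]
  refine prod_congr rfl fun i _ => ?_
  rw [← filter_lt_eq_Ioi, prod_filter]

section Vandermonde

variable {R : Type*} [CommRing R]

theorem Matrix.of_eval_eq_vandermonde_mul_of_coeff {N : ℕ} (v : Fin N → R) (p : Fin N → R[X])
    (hp : ∀ j, (p j).natDegree < N) :
    of (fun i j => (p j).eval (v i)) = vandermonde v * of fun k j : Fin N => (p j).coeff k := by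
  ext i j
  rw [mul_apply, of_apply, eval_eq_sum_range' (hp j), ← Fin.sum_univ_eq_sum_range]
  refine sum_congr rfl fun k _ => ?_
  rw [vandermonde_apply, of_apply, mul_comm]

theorem Matrix.det_of_mul_eval {N : ℕ} (f : R → R) (p : Fin N → R[X])
    (hp : ∀ j, (p j).natDegree < N) (v : Fin N → R) :
    (of fun i j => f (v i) * (p j).eval (v i)).det =
      (∏ i, f (v i)) * (vandermonde v).det * (of fun k j : Fin N => (p j).coeff k).det := by
  rw [mul_assoc, ← det_mul, ← of_eval_eq_vandermonde_mul_of_coeff v p hp, ← det_mul_column]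
  rfl

theorem Matrix.det_vandermonde_natCast_add_one (N : ℕ) :
    (vandermonde fun i : Fin N => ((i : ℕ) : R) + 1).det = ∏ i : Fin N, ((i : ℕ)! : R) := by
  cases N with
  | zero => simp
  | succ N =>
    rw [det_vandermonde_add, det_vandermonde_id_eq_superFactorial, ← Nat.prod_range_succ_factorial,
      Fin.prod_univ_eq_prod_range (fun i => (i ! : R))]
    push_cast
    rfl

end Vandermonde

section Pochhammer

theorem ascPochhammer_eval_add_eq_mul {R : Type*} [CommSemiring R] (m k : ℕ) (x : R) :
    (ascPochhammer R (m + k)).eval x =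
      (ascPochhammer R m).eval x * (ascPochhammer R k).eval (x + m) := by
  rw [← ascPochhammer_mul, eval_mul, eval_comp, eval_add, eval_X, eval_natCast]

variable {K : Type*} [Semifield K] [CharZero K]

theorem ascPochhammer_eval_natCast_add_one (m k : ℕ) :
    (ascPochhammer K k).eval ((m : K) + 1) = (m + k)! / m ! := by
  rw [← factorial_mul_ascPochhammer, mul_div_cancel_left₀]
  exact_mod_cast m.factorial_ne_zero

theorem Nat.cast_add_choose_left_eq_ascPochhammer_div (a k : ℕ) :
    ((a + k).choose a : K) = (ascPochhammer K k).eval ((a : K) + 1) / k ! := by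
  rw [ascPochhammer_eval_natCast_add_one, Nat.cast_add_choose, div_div]

end Pochhammer

theorem zchoose_of_neg {a k : ℤ} (hk : k < 0) : zchoose a k = 0 :=
  if_neg fun h => (h.1.trans_lt hk).false

theorem zchoose_zero_right {a : ℤ} (ha : 0 ≤ a) : zchoose a 0 = 1 := by
  simp [zchoose, ha]

theorem zchoose_add_eq_ascPochhammer_div (a : ℤ) (k : ℕ) (ha : -(k : ℤ) ≤ a) :
    (zchoose (a + k) a : ℚ) = (ascPochhammer ℚ k).eval ((a : ℚ) + 1) / k ! := by
  rcases le_or_gt 0 a with h0 | h0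
  · lift a to ℕ using h0
    rw [zchoose, if_pos ⟨by positivity, by omega⟩, ← Nat.cast_add, Int.toNat_natCast,
      Int.toNat_natCast, Nat.cast_add_choose_left_eq_ascPochhammer_div, Int.cast_natCast]
  · obtain ⟨m, hm⟩ : ∃ m : ℕ, a + 1 = -(m : ℤ) := ⟨(-(a + 1)).toNat, by omega⟩
    have hroot : (a : ℚ) + 1 = -(m : ℚ) := by exact_mod_cast hm
    rw [zchoose_of_neg h0, hroot, ascPochhammer_eval_neg_coe_nat_of_lt (by omega)]
    simp

noncomputable def columnPoly (R : Type*) [CommRing R] (N n j : ℕ) : R[X] :=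
  (ascPochhammer R j).comp (X - (j : R[X])) *
    (ascPochhammer R (N - 1 - j)).comp (X + ((n - N : ℕ) : R[X]))

section columnPoly

variable {R : Type*} [CommRing R]

theorem natDegree_columnPoly_lt [Nontrivial R] [NoZeroDivisors R] {N j : ℕ} (hj : j < N) (n : ℕ) :
    (columnPoly R N n j).natDegree < N := by
  calc (columnPoly R N n j).natDegree
      ≤ j * 1 + (N - 1 - j) * 1 := by
        refine natDegree_mul_le.trans (add_le_add ?_ ?_) <;>
          rw [natDegree_comp, ascPochhammer_natDegree]
        · rw [sub_eq_add_neg, ← map_natCast C, ← C_neg, natDegree_X_add_C]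
        · rw [← map_natCast C, natDegree_X_add_C]
    _ < N := by omega

theorem ascPochhammer_eval_sub_eq_mul_columnPoly {N n j : ℕ} (hj : j < N) (hN : N ≤ n) (x : R) :
    (ascPochhammer R (n - 1)).eval (x - j) =
      (ascPochhammer R (n - N)).eval x * (columnPoly R N n j).eval x := by
  rw [show n - 1 = j + ((n - N) + (N - 1 - j)) by omega, ascPochhammer_eval_add_eq_mul,
    ascPochhammer_eval_add_eq_mul, columnPoly]
  simp only [eval_mul, eval_comp, eval_sub, eval_add, eval_X, eval_natCast, sub_add_cancel]
  ring

end columnPoly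

noncomputable def rowFactor (N n : ℕ) (x : ℚ) : ℚ :=
  (ascPochhammer ℚ (n - N)).eval x / (n - 1)!

theorem rowFactor_div_rowFactor_succ {N n x : ℕ} (hN : N ≤ n) (hx : 1 ≤ x) (i : ℕ) :
    rowFactor N n x / (rowFactor N n ((i : ℚ) + 1) * i !) =
      (x + n - N - 1)! / ((x - 1)! * (i + 1 + n - N - 1)!) := by
  obtain ⟨m, rfl⟩ : ∃ m, x = m + 1 := ⟨x - 1, by omega⟩
  rw [rowFactor, rowFactor, Nat.cast_add_one, ascPochhammer_eval_natCast_add_one,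
    ascPochhammer_eval_natCast_add_one, show m + 1 + n - N - 1 = m + (n - N) by omega,
    Nat.add_sub_cancel, show i + 1 + n - N - 1 = i + (n - N) by omega]
  field_simp

def waveMatrix (N n : ℕ) (y : Fin N → ℕ) : Matrix (Fin N) (Fin N) ℚ :=
  of fun i j => (zchoose ((y i : ℤ) - (j.1 + 1) + n - 1) ((y i : ℤ) - (j.1 + 1)) : ℚ)

theorem waveMatrix_eq_of_mul_eval {N n : ℕ} (hN : N ≤ n) {y : Fin N → ℕ} (hy : ∀ i, 1 ≤ y i) :
    waveMatrix N n y =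
      of fun i (j : Fin N) => rowFactor N n (y i) * (columnPoly ℚ N n j).eval (y i : ℚ) := by
  ext i j
  have hyi := hy i
  have hj := j.2
  rw [waveMatrix, of_apply, of_apply,
    show (y i : ℤ) - (j.1 + 1) + n - 1 = (y i : ℤ) - (j.1 + 1) + ((n - 1 : ℕ) : ℤ) by omega,
    zchoose_add_eq_ascPochhammer_div _ _ (by omega), Int.cast_sub,
    show ((y i : ℤ) : ℚ) - ((j.1 + 1 : ℤ) : ℚ) + 1 = (y i : ℚ) - (j.1 : ℕ) by push_cast; ring,
    ascPochhammer_eval_sub_eq_mul_columnPoly hj hN, rowFactor]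
  ring

theorem det_waveMatrix_succ {N n : ℕ} (hN : N ≤ n) :
    (waveMatrix N n fun i => i.1 + 1).det = 1 := by
  rw [det_of_isLowerTriangular]
  · refine prod_eq_one fun i _ => ?_
    have := i.2
    rw [waveMatrix, of_apply, Nat.cast_add, Nat.cast_one, sub_self, zero_add,
      zchoose_zero_right (by omega), Nat.cast_one]
  · intro i j hij
    rw [waveMatrix, of_apply, zchoose_of_neg, Nat.cast_zero]
    have : i.1 < j.1 := hij
    omega

theorem wave_function_det_eval_general (N n : ℕ) (hn : N ≤ n)
    (y : Fin N → ℕ) (hy1 : ∀ i, 1 ≤ y i) :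
    (Matrix.of fun i j : Fin N =>
        (zchoose ((y i : ℤ) - (j.1 + 1) + n - 1) ((y i : ℤ) - (j.1 + 1)) : ℚ)).det
      = (∏ p ∈ Finset.univ.filter (fun p : Fin N × Fin N => p.1 < p.2),
            ((y p.2 : ℚ) - (y p.1 : ℚ))) *
        ∏ i : Fin N,
          (Nat.factorial (y i + n - N - 1) : ℚ) /
            ((Nat.factorial (y i - 1) : ℚ) *
              (Nat.factorial ((i.1 + 1) + n - N - 1) : ℚ)) := by
  have hG (j : Fin N) : (columnPoly ℚ N n j).natDegree < N := natDegree_columnPoly_lt j.2 n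
  have hdet_y := det_of_mul_eval (rowFactor N n) _ hG fun i => (y i : ℚ)
  have hdet_succ := det_of_mul_eval (rowFactor N n) _ hG fun i => ((i.1 + 1 : ℕ) : ℚ)
  rw [← waveMatrix_eq_of_mul_eval hn hy1] at hdet_y
  rw [← waveMatrix_eq_of_mul_eval hn fun i => Nat.le_add_left 1 i.1, det_waveMatrix_succ hn]
    at hdet_succ
  push_cast at hdet_succ
  rw [det_vandermonde_natCast_add_one] at hdet_succ
  change (waveMatrix N n y).det = _
  rw [hdet_y, eq_one_div_of_mul_eq_one_right hdet_succ.symm, det_vandermonde,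
    ← prod_filter_fst_lt_snd,
    ← prod_congr rfl fun i _ => rowFactor_div_rowFactor_succ hn (hy1 i) i.1,
    prod_div_distrib, prod_mul_distrib]
  ring

/-- Evaluation of the wave function `ψ₁`:
for `n ≥ N ≥ 1` and `1 ≤ y₁ < ⋯ < y_N`,
`det_{1≤i,j≤N} C(y_i-j+n-1, y_i-j)
   = ∏_{1≤i<j≤N} (y_j-y_i) ⬝ ∏_{i=1}^{N} (y_i-N+n-1)! / ((y_i-1)! (i-N+n-1)!)`. -/
theorem wave_function_det_eval (N n : ℕ) (hN : 1 ≤ N) (hn : N ≤ n)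
    (y : Fin N → ℕ) (hy1 : ∀ i, 1 ≤ y i) (hmono : StrictMono y) :
    (Matrix.of fun i j : Fin N =>
        (zchoose ((y i : ℤ) - (j.1 + 1) + n - 1) ((y i : ℤ) - (j.1 + 1)) : ℚ)).det
      = (∏ p ∈ Finset.univ.filter (fun p : Fin N × Fin N => p.1 < p.2),
            ((y p.2 : ℚ) - (y p.1 : ℚ))) *
        ∏ i : Fin N,
          (Nat.factorial (y i + n - N - 1) : ℚ) /
            ((Nat.factorial (y i - 1) : ℚ) *
              (Nat.factorial ((i.1 + 1) + n - N - 1) : ℚ)) :=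
  wave_function_det_eval_general N n hn y hy1
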